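/- arXiv:1508.06450 — 5 statements merged into one kernel-verified Lean document; each statement's English description precedes it below -/
import Mathlib

section
/- Let f satisfy (H). Then limsup_{t→∞} f'(t)F(t)/f(t)² ≥ 1/2. (Equivalently: it is impossible that limsup_{t→∞} f'(t)F(t)/f(t)² < 1/2.) -/
open Filter Set MeasureTheory intervalIntegral

/-!
Suppose `f' F / f² < 1/2` on `[a, ∞)`. Then `(F / f)' = 1 - f' F / f² > 1/2`, so
`F / f ≥ (t - a) / 2`, i.e. `(log F)' = f / F ≤ 2 / (t - a)`. Integrating gives `F = O(t²)`,
and then `f ≤ 2 F / (t - a) = O(t)`, contradicting superlinearity.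
-/

theorem hasDerivAt_integral_of_continuousOn_Ici {f : ℝ → ℝ} {a t : ℝ}
    (hf : ContinuousOn f (Ici a)) (ht : a < t) :
    HasDerivAt (fun u => ∫ s in a..u, f s) (f t) t :=
  integral_hasDerivAt_right (hf.mono (uIcc_of_le ht.le ▸ Icc_subset_Ici_self)).intervalIntegrable
    ((hf.mono Ioi_subset_Ici_self).stronglyMeasurableAtFilter isOpen_Ioi t ht)
    (hf.continuousAt (Ici_mem_nhds ht))

theorem monotoneOn_div_sub_mul_of_deriv_quotient_le {f f' F : ℝ → ℝ} {a c : ℝ}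
    (hf : ∀ t ∈ Ici a, HasDerivAt f (f' t) t) (hF : ∀ t ∈ Ici a, HasDerivAt F (f t) t)
    (hf0 : ∀ t ∈ Ici a, f t ≠ 0) (hc : ∀ t ∈ Ici a, f' t * F t / f t ^ 2 ≤ c) :
    MonotoneOn (fun t => F t / f t - (1 - c) * t) (Ici a) := by
  have hderiv : ∀ t ∈ Ici a,
      HasDerivAt (fun t => F t / f t - (1 - c) * t) (c - f' t * F t / f t ^ 2) t := by
    intro t ht
    refine (((hF t ht).div (hf t ht) (hf0 t ht)).sub
      ((hasDerivAt_id t).const_mul (1 - c))).congr_deriv ?_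
    field_simp [hf0 t ht]
    ring
  refine monotoneOn_of_hasDerivWithinAt_nonneg (f' := fun t => c - f' t * F t / f t ^ 2)
    (convex_Ici a) (fun t ht => (hderiv t ht).continuousAt.continuousWithinAt)
    (fun t ht => ?_) (fun t ht => ?_)
  · exact (hderiv t (interior_subset ht)).hasDerivWithinAt
  · exact sub_nonneg.2 (hc t (interior_subset ht))

theorem antitoneOn_div_pow_of_mul_sub_le {f F : ℝ → ℝ} {a : ℝ} (n : ℕ)
    (hF : ∀ t ∈ Ioi a, HasDerivAt F (f t) t) (hFpos : ∀ t ∈ Ioi a, 0 < F t)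
    (hle : ∀ t ∈ Ioi a, f t * (t - a) ≤ n * F t) :
    AntitoneOn (fun t => F t / (t - a) ^ n) (Ioi a) := by
  have hderiv : ∀ t ∈ Ioi a, HasDerivAt (fun t => Real.log (F t) - n * Real.log (t - a))
      (f t / F t - n / (t - a)) t := by
    intro t ht
    refine (((hF t ht).log (hFpos t ht).ne').sub
      ((((hasDerivAt_id t).sub_const a).log (sub_pos.2 ht).ne').const_mul (n : ℝ))).congr_deriv ?_
    simp [div_eq_mul_inv]
  have hlog : AntitoneOn (fun t => Real.log (F t) - n * Real.log (t - a)) (Ioi a) := by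
    refine antitoneOn_of_hasDerivWithinAt_nonpos (f' := fun t => f t / F t - n / (t - a))
      (convex_Ioi a) (fun t ht => (hderiv t ht).continuousAt.continuousWithinAt)
      (fun t ht => ?_) (fun t ht => ?_)
    · exact (hderiv t (interior_subset ht)).hasDerivWithinAt
    · rw [interior_Ioi] at ht
      have hta : 0 < t - a := sub_pos.2 ht
      rw [sub_nonpos, div_le_div_iff₀ (hFpos t ht) hta]
      exact hle t ht
  intro s hs t ht hst
  have hexp : ∀ u ∈ Ioi a,
      F u / (u - a) ^ n = Real.exp (Real.log (F u) - n * Real.log (u - a)) := by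
    intro u hu
    rw [Real.exp_sub, Real.exp_log (hFpos u hu), ← Real.log_pow,
      Real.exp_log (pow_pos (sub_pos.2 hu) n)]
  beta_reduce
  rw [hexp s hs, hexp t ht]
  exact Real.exp_le_exp.2 (hlog hs ht hst)

theorem not_tendsto_div_atTop_of_mul_sub_le_two_mul {f F : ℝ → ℝ} {a : ℝ}
    (hF : ∀ t ∈ Ioi a, HasDerivAt F (f t) t) (hFpos : ∀ t ∈ Ioi a, 0 < F t)
    (hle : ∀ t ∈ Ioi a, f t * (t - a) ≤ 2 * F t) :
    ¬ Tendsto (fun t => f t / t) atTop atTop := by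
  intro hsuper
  set C := F (a + 1)
  have hC : 0 < C := hFpos (a + 1) (lt_add_one a)
  obtain ⟨t, hft, ht⟩ := ((hsuper.eventually_gt_atTop (4 * C)).and
    (eventually_ge_atTop (max (a + 1) (-a)))).exists
  rw [max_le_iff] at ht
  have hta : a < t := by linarith
  have htpos : 0 < t := by linarith
  have hFt : F t ≤ C * (t - a) ^ 2 := by
    have := antitoneOn_div_pow_of_mul_sub_le 2 hF hFpos (by exact_mod_cast hle)
      (lt_add_one a) hta ht.1
    beta_reduce at this
    rwa [add_sub_cancel_left, one_pow, div_one, div_le_iff₀ (by nlinarith)] at this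
  have hf : f t ≤ 2 * C * (t - a) := by
    refine le_of_mul_le_mul_right ?_ (sub_pos.2 hta)
    nlinarith [hle t hta]
  rw [lt_div_iff₀ htpos] at hft
  nlinarith

theorem stmt_0_general (f f' F : ℝ → ℝ)
    (hf' : ∀ t ∈ Set.Ici (0:ℝ), HasDerivAt f (f' t) t)
    (hmono : MonotoneOn f (Set.Ici 0))
    (hf0 : 0 < f 0)
    (hsuper : Tendsto (fun t => f t / t) atTop atTop)
    (hF : ∀ t, F t = ∫ s in (0:ℝ)..t, f s) :
    ((1/2 : ℝ) : EReal) ≤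
      Filter.limsup (fun t => ((f' t * F t / (f t) ^ 2 : ℝ) : EReal)) atTop := by
  by_contra hlt
  obtain ⟨a₀, ha₀⟩ := eventually_atTop.1 (eventually_lt_of_limsup_lt (not_le.1 hlt))
  set a := max a₀ 1
  have ha : 0 < a := zero_lt_one.trans_le (le_max_right _ _)
  have hfpos : ∀ t ∈ Ici (0:ℝ), 0 < f t := fun t ht => hf0.trans_le (hmono self_mem_Ici ht ht)
  have hfcont : ContinuousOn f (Ici 0) := fun t ht => (hf' t ht).continuousAt.continuousWithinAt
  have hFderiv : ∀ t ∈ Ioi (0:ℝ), HasDerivAt F (f t) t := fun t ht =>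
    funext hF ▸ hasDerivAt_integral_of_continuousOn_Ici hfcont ht
  have hFpos : ∀ t ∈ Ioi (0:ℝ), 0 < F t := fun t ht => hF t ▸
    intervalIntegral_pos_of_pos_on
      (hfcont.mono (uIcc_of_le (mem_Ioi.1 ht).le ▸ Icc_subset_Ici_self)).intervalIntegrable
      (fun s hs => hfpos s hs.1.le) ht
  have hgrowth := monotoneOn_div_sub_mul_of_deriv_quotient_le (a := a) (c := 1 / 2)
    (fun t ht => hf' t (ha.le.trans ht)) (fun t ht => hFderiv t (ha.trans_le ht))
    (fun t ht => (hfpos t (ha.le.trans ht)).ne')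
    (fun t ht => (EReal.coe_lt_coe_iff.1 (ha₀ t ((le_max_left _ _).trans ht))).le)
  refine not_tendsto_div_atTop_of_mul_sub_le_two_mul (a := a)
    (fun t ht => hFderiv t (ha.trans ht)) (fun t ht => hFpos t (ha.trans ht))
    (fun t ht => ?_) hsuper
  have hFa : 0 < F a / f a := div_pos (hFpos a ha) (hfpos a ha.le)
  have hft : 0 < f t := hfpos t (ha.trans ht).le
  have hGt := hgrowth self_mem_Ici (mem_Ici.2 (le_of_lt ht)) (le_of_lt ht)
  beta_reduce at hGt
  rw [← le_div_iff₀' hft, mul_div_assoc]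
  linarith

/-- If `f` satisfies (H) (C¹, nondecreasing, `f 0 > 0`, superlinear), then
`limsup_{t→∞} f'(t)F(t)/f(t)² ≥ 1/2`, where `F(t) = ∫₀^t f(s) ds`.
The limsup is taken in `EReal` so that it is well-defined even if the quotient is unbounded. -/
theorem stmt_0 (f f' F : ℝ → ℝ)
    (hf' : ∀ t ∈ Set.Ici (0:ℝ), HasDerivAt f (f' t) t)
    (hf'cont : ContinuousOn f' (Set.Ici 0))
    (hmono : MonotoneOn f (Set.Ici 0))
    (hf0 : 0 < f 0)
    (hsuper : Tendsto (fun t => f t / t) atTop atTop)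
    (hF : ∀ t, F t = ∫ s in (0:ℝ)..t, f s) :
    ((1/2 : ℝ) : EReal) ≤
      Filter.limsup (fun t => ((f' t * F t / (f t) ^ 2 : ℝ) : EReal)) atTop :=
  stmt_0_general f f' F hf' hmono hf0 hsuper hF
end

section
/- Let f satisfy (H) and additionally be convex (f' nondecreasing). Then liminf_{t→∞} f'(t)F(t)/f(t)² ≥ 1/2. -/
/-!
On `[0, t]` monotonicity of `f'` gives `(f²)' = 2 f f' ≤ 2 f'(t) f`, so integrating,
`f(t)² - f(0)² ≤ 2 f'(t) F(t)`. Dividing by `f(t)²`, which tends to `∞` by (H), yields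
`f'(t) F(t) / f(t)² ≥ 1/2 - f(0)² / (2 f(t)²) → 1/2`.
-/

open Filter Set MeasureTheory intervalIntegral Topology

theorem sq_sub_sq_le_two_mul_deriv_mul_integral {f f' : ℝ → ℝ} {a b : ℝ} (hab : a ≤ b)
    (hf : ∀ x ∈ Icc a b, HasDerivAt f (f' x) x) (hf' : ∀ x ∈ Icc a b, f' x ≤ f' b)
    (hf_nonneg : ∀ x ∈ Icc a b, 0 ≤ f x) :
    f b ^ 2 - f a ^ 2 ≤ 2 * f' b * ∫ x in a..b, f x := by
  have hcont : ContinuousOn f (Icc a b) := fun x hx => (hf x hx).continuousAt.continuousWithinAt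
  calc f b ^ 2 - f a ^ 2 ≤ ∫ x in a..b, 2 * f' b * f x := by
        refine sub_le_integral_of_hasDeriv_right_of_le hab (hcont.pow 2)
          (fun x hx => ((hf x (Ioo_subset_Icc_self hx)).pow 2).hasDerivWithinAt)
          (continuousOn_const.mul hcont).integrableOn_Icc fun x hx => ?_
        have hx' := Ioo_subset_Icc_self hx
        have := mul_le_mul_of_nonneg_left (hf' x hx') (hf_nonneg x hx')
        simp only [Nat.cast_ofNat, Nat.add_one_sub_one, pow_one]
        linarith
    _ = 2 * f' b * ∫ x in a..b, f x := integral_const_mul _ _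

theorem tendsto_atTop_of_tendsto_div_atTop {f : ℝ → ℝ}
    (hf : Tendsto (fun t => f t / t) atTop atTop) : Tendsto f atTop atTop := by
  refine tendsto_atTop_mono' _ ?_ tendsto_id
  filter_upwards [hf.eventually_ge_atTop 1, eventually_gt_atTop 0] with t h1 ht
  simpa using (le_div_iff₀ ht).mp h1

theorem EReal.le_liminf_coe_of_tendsto_of_le {α : Type*} {l : Filter α} [l.NeBot]
    {g h : α → ℝ} {c : ℝ} (hg : Tendsto g l (𝓝 c)) (hgh : ∀ᶠ x in l, g x ≤ h x) :
    (c : EReal) ≤ liminf (fun x => (h x : EReal)) l := by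
  rw [← ((continuous_coe_real_ereal.tendsto c).comp hg).liminf_eq]
  exact liminf_le_liminf (hgh.mono fun x hx => EReal.coe_le_coe_iff.mpr hx)

theorem stmt_2_general (f f' F : ℝ → ℝ)
    (hf' : ∀ t ∈ Set.Ici (0:ℝ), HasDerivAt f (f' t) t)
    (hmono : MonotoneOn f (Set.Ici 0))
    (hf0 : 0 < f 0)
    (hsuper : Tendsto (fun t => f t / t) atTop atTop)
    (hconv : MonotoneOn f' (Set.Ici 0))
    (hF : ∀ t, F t = ∫ s in (0:ℝ)..t, f s) :
    ((1/2 : ℝ) : EReal) ≤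
      Filter.liminf (fun t => ((f' t * F t / (f t) ^ 2 : ℝ) : EReal)) atTop := by
  have hpos : ∀ t ∈ Ici (0:ℝ), 0 < f t := fun t ht => hf0.trans_le (hmono self_mem_Ici ht ht)
  have hkey : ∀ t ∈ Ici (0:ℝ), f t ^ 2 - f 0 ^ 2 ≤ 2 * (f' t * F t) := fun t ht => by
    have := sq_sub_sq_le_two_mul_deriv_mul_integral ht (fun x hx => hf' x hx.1)
      (fun x hx => hconv hx.1 ht hx.2) (fun x hx => (hpos x hx.1).le)
    rw [hF]
    linarith
  have hlower : Tendsto (fun t => 1 / 2 - f 0 ^ 2 / (2 * f t ^ 2)) atTop (𝓝 (1 / 2)) := by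
    have hsq := ((tendsto_pow_atTop two_ne_zero).comp
      (tendsto_atTop_of_tendsto_div_atTop hsuper)).const_mul_atTop two_pos
    simpa using tendsto_const_nhds.sub (tendsto_const_nhds.div_atTop hsq)
  refine EReal.le_liminf_coe_of_tendsto_of_le hlower ?_
  filter_upwards [eventually_ge_atTop 0] with t ht
  have hft_ne := (hpos t ht).ne'
  rw [show (1 : ℝ) / 2 - f 0 ^ 2 / (2 * f t ^ 2) = (f t ^ 2 - f 0 ^ 2) / (2 * f t ^ 2) by
    field_simp, div_le_div_iff₀ (by positivity) (by positivity)]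
  nlinarith [hkey t ht]

/-- If `f` satisfies (H) and is in addition convex (`f'` nondecreasing), then
`liminf_{t→∞} f'(t)F(t)/f(t)² ≥ 1/2`, where `F(t) = ∫₀^t f(s) ds`.
The liminf is taken in `EReal` so that it is well-defined even if the quotient tends to `∞`. -/
theorem stmt_2 (f f' F : ℝ → ℝ)
    (hf' : ∀ t ∈ Set.Ici (0:ℝ), HasDerivAt f (f' t) t)
    (hf'cont : ContinuousOn f' (Set.Ici 0))
    (hmono : MonotoneOn f (Set.Ici 0))
    (hf0 : 0 < f 0)
    (hsuper : Tendsto (fun t => f t / t) atTop atTop)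
    (hconv : MonotoneOn f' (Set.Ici 0))
    (hF : ∀ t, F t = ∫ s in (0:ℝ)..t, f s) :
    ((1/2 : ℝ) : EReal) ≤
      Filter.liminf (fun t => ((f' t * F t / (f t) ^ 2 : ℝ) : EReal)) atTop :=
  stmt_2_general f f' F hf' hmono hf0 hsuper hconv hF
end

section
/- Let f : [0,∞) → ℝ be C², positive, with f' positive, and let 0 < τ be such that f(t)f''(t)/f'(t)² ≥ τ for all t ≥ T (for some T > 0). Then the function t ↦ f'(t)/f(t)^τ is nondecreasing on [T,∞), and for all t ≥ T one has f'(t)F(t) ≥ f(t)^τ · ( f(t)^{2−τ} − f(T)^{2−τ} ) / (2−τ). -/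
/-!
Along `[T, ∞)` the derivative of `f' / f ^ τ` is `f ^ (τ - 1) (f f'' - τ f'²) / f ^ (2τ) ≥ 0`, so
`f' / f ^ τ` is nondecreasing. Hence for `T ≤ s ≤ t` we have `f(t)^τ f'(s) ≤ f'(t) f(s)^τ`;
multiplying by `f(s)^(1-τ)` and integrating over `[T, t]` gives
`f(t)^τ ∫_T^t f' f^(1-τ) ≤ f'(t) ∫_T^t f ≤ f'(t) F(t)`, and the left integral is
`(f(t)^(2-τ) - f(T)^(2-τ)) / (2 - τ)`.
-/

open Set MeasureTheory intervalIntegral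

theorem monotoneOn_div_rpow_of_mul_sq_le_mul {f f' f'' : ℝ → ℝ} {τ : ℝ} {s : Set ℝ}
    (hs : Convex ℝ s) (hf' : ∀ t ∈ s, HasDerivAt f (f' t) t)
    (hf'' : ∀ t ∈ s, HasDerivAt f' (f'' t) t) (hpos : ∀ t ∈ s, 0 < f t)
    (hτ : ∀ t ∈ s, τ * f' t ^ 2 ≤ f t * f'' t) :
    MonotoneOn (fun t => f' t / f t ^ τ) s := by
  have hderiv : ∀ t ∈ s, HasDerivAt (fun t => f' t / f t ^ τ)
      ((f'' t * f t ^ τ - f' t * (f' t * τ * f t ^ (τ - 1))) / (f t ^ τ) ^ 2) t := fun t ht =>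
    (hf'' t ht).div ((hf' t ht).rpow_const (Or.inl (hpos t ht).ne'))
      (Real.rpow_pos_of_pos (hpos t ht) τ).ne'
  refine monotoneOn_of_hasDerivWithinAt_nonneg hs
    (fun t ht => (hderiv t ht).continuousAt.continuousWithinAt)
    (fun t ht => (hderiv t (interior_subset ht)).hasDerivWithinAt) fun t ht => ?_
  have ht := interior_subset ht
  have hft := hpos t ht
  have hnum : f'' t * f t ^ τ - f' t * (f' t * τ * f t ^ (τ - 1))
      = f t ^ (τ - 1) * (f t * f'' t - τ * f' t ^ 2) := by
    rw [show f t ^ τ = f t ^ (τ - 1) * f t by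
      rw [← Real.rpow_add_one hft.ne', sub_add_cancel]]
    ring
  rw [hnum]
  have hpow := Real.rpow_pos_of_pos hft (τ - 1)
  exact div_nonneg (mul_nonneg hpow.le (sub_nonneg.2 (hτ t ht))) (sq_nonneg _)

theorem integral_mul_rpow_of_hasDerivAt {f f' : ℝ → ℝ} {a b p : ℝ} (hp : p ≠ -1)
    (hf : ∀ x ∈ uIcc a b, HasDerivAt f (f' x) x) (hf' : ContinuousOn f' (uIcc a b))
    (hpos : ∀ x ∈ uIcc a b, 0 < f x) :
    ∫ x in a..b, f' x * f x ^ p = (f b ^ (p + 1) - f a ^ (p + 1)) / (p + 1) := by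
  have hp1 : p + 1 ≠ 0 := fun h => hp (eq_neg_of_add_eq_zero_left h)
  have hcf : ContinuousOn f (uIcc a b) := fun x hx => (hf x hx).continuousAt.continuousWithinAt
  rw [sub_div]
  refine integral_eq_sub_of_hasDerivAt (f := fun x => f x ^ (p + 1) / (p + 1)) (fun x hx => ?_)
    (hf'.mul (hcf.rpow_const fun x hx => Or.inl (hpos x hx).ne')).intervalIntegrable
  refine (((hf x hx).rpow_const (Or.inl (hpos x hx).ne')).div_const (p + 1)).congr_deriv ?_
  rw [add_sub_cancel_right]
  field_simp

theorem mul_integral_le_of_monotoneOn_div_rpow {f f' : ℝ → ℝ} {τ a b : ℝ} (hab : a ≤ b)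
    (hmono : MonotoneOn (fun t => f' t / f t ^ τ) (Icc a b))
    (hf : ContinuousOn f (Icc a b)) (hf' : ContinuousOn f' (Icc a b))
    (hpos : ∀ x ∈ Icc a b, 0 < f x) :
    f b ^ τ * ∫ x in a..b, f' x * f x ^ (1 - τ) ≤ f' b * ∫ x in a..b, f x := by
  rw [← uIcc_of_le hab] at hf hf'
  have hfp : ContinuousOn (fun x => f x ^ (1 - τ)) (uIcc a b) :=
    hf.rpow_const fun x hx => Or.inl (hpos x (uIcc_of_le hab ▸ hx)).ne'
  rw [← intervalIntegral.integral_const_mul, ← intervalIntegral.integral_const_mul]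
  refine integral_mono_on hab ((hf'.mul hfp).intervalIntegrable.const_mul _)
    (hf.intervalIntegrable.const_mul _) fun x hx => ?_
  have hfx := hpos x hx
  have hfb := hpos b (right_mem_Icc.2 hab)
  have hle : f' x * f b ^ τ ≤ f' b * f x ^ τ :=
    (div_le_div_iff₀ (Real.rpow_pos_of_pos hfx τ) (Real.rpow_pos_of_pos hfb τ)).1
      (hmono hx (right_mem_Icc.2 hab) hx.2)
  calc f b ^ τ * (f' x * f x ^ (1 - τ)) = f' x * f b ^ τ * f x ^ (1 - τ) := by ring
    _ ≤ f' b * f x ^ τ * f x ^ (1 - τ) :=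
      mul_le_mul_of_nonneg_right hle (Real.rpow_nonneg hfx.le _)
    _ = f' b * f x := by rw [mul_assoc, ← Real.rpow_add hfx, add_sub_cancel, Real.rpow_one]

theorem stmt_3_general (f f' f'' F : ℝ → ℝ) (τ T : ℝ)
    (hf' : ∀ t ∈ Set.Ici (0:ℝ), HasDerivAt f (f' t) t)
    (hf'' : ∀ t ∈ Set.Ici (0:ℝ), HasDerivAt f' (f'' t) t)
    (hfpos : ∀ t ≥ (0:ℝ), 0 < f t)
    (hf'pos : ∀ t ≥ (0:ℝ), 0 < f' t)
    (hτ2 : τ < 2) (hT : 0 < T)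
    (hyp : ∀ t ≥ T, τ ≤ f t * f'' t / (f' t) ^ 2)
    (hF : ∀ t, F t = ∫ s in (0:ℝ)..t, f s) :
    MonotoneOn (fun t => f' t / f t ^ τ) (Set.Ici T) ∧
      ∀ t ≥ T, f t ^ τ * ((f t ^ (2 - τ) - f T ^ (2 - τ)) / (2 - τ)) ≤ f' t * F t := by
  have hT0 : Ici T ⊆ Ici 0 := Ici_subset_Ici.2 hT.le
  have hcf : ContinuousOn f (Ici 0) := fun t ht => (hf' t ht).continuousAt.continuousWithinAt
  have hcf' : ContinuousOn f' (Ici 0) := fun t ht => (hf'' t ht).continuousAt.continuousWithinAt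
  have hmono : MonotoneOn (fun t => f' t / f t ^ τ) (Ici T) :=
    monotoneOn_div_rpow_of_mul_sq_le_mul (convex_Ici T) (fun t ht => hf' t (hT0 ht))
      (fun t ht => hf'' t (hT0 ht)) (fun t ht => hfpos t (hT0 ht)) fun t ht =>
        (le_div_iff₀ (pow_pos (hf'pos t (hT0 ht)) 2)).1 (hyp t ht)
  refine ⟨hmono, fun t ht => ?_⟩
  have hIcc : Icc T t ⊆ Ici 0 := Icc_subset_Ici_self.trans hT0
  have huIcc : uIcc T t ⊆ Ici 0 := uIcc_of_le ht ▸ hIcc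
  have hFTC := integral_mul_rpow_of_hasDerivAt (p := 1 - τ) (by linarith)
    (fun x hx => hf' x (huIcc hx)) (hcf'.mono huIcc) fun x hx => hfpos x (huIcc hx)
  rw [show 1 - τ + 1 = 2 - τ by ring] at hFTC
  rw [← hFTC, hF]
  calc f t ^ τ * ∫ s in T..t, f' s * f s ^ (1 - τ) ≤ f' t * ∫ s in T..t, f s :=
        mul_integral_le_of_monotoneOn_div_rpow ht (hmono.mono Icc_subset_Ici_self)
          (hcf.mono hIcc) (hcf'.mono hIcc) fun x hx => hfpos x (hIcc hx)
    _ ≤ f' t * ∫ s in (0:ℝ)..t, f s := by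
      refine mul_le_mul_of_nonneg_left (integral_mono_interval hT.le ht le_rfl ?_ ?_)
        (hf'pos t (hT.le.trans ht)).le
      · exact (ae_restrict_mem measurableSet_Ioc).mono fun x hx => (hfpos x hx.1.le).le
      · exact (hcf.mono fun x hx => (uIcc_of_le (hT.le.trans ht) ▸ hx).1).intervalIntegrable

/-- If `f : [0,∞) → ℝ` is C², positive with `f' > 0`, `0 < τ < 2`, `T > 0`, and
`f(t)f''(t)/f'(t)² ≥ τ` for all `t ≥ T`, then `t ↦ f'(t)/f(t)^τ` is nondecreasing on `[T,∞)`
and `f'(t)F(t) ≥ f(t)^τ (f(t)^{2−τ} − f(T)^{2−τ})/(2−τ)` for all `t ≥ T`,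
where `F(t) = ∫₀^t f(s) ds`. -/
theorem stmt_3 (f f' f'' F : ℝ → ℝ) (τ T : ℝ)
    (hf' : ∀ t ∈ Set.Ici (0:ℝ), HasDerivAt f (f' t) t)
    (hf'' : ∀ t ∈ Set.Ici (0:ℝ), HasDerivAt f' (f'' t) t)
    (hf''cont : ContinuousOn f'' (Set.Ici 0))
    (hfpos : ∀ t ≥ (0:ℝ), 0 < f t)
    (hf'pos : ∀ t ≥ (0:ℝ), 0 < f' t)
    (hτpos : 0 < τ) (hτ2 : τ < 2) (hT : 0 < T)
    (hyp : ∀ t ≥ T, τ ≤ f t * f'' t / (f' t) ^ 2)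
    (hF : ∀ t, F t = ∫ s in (0:ℝ)..t, f s) :
    MonotoneOn (fun t => f' t / f t ^ τ) (Set.Ici T) ∧
      ∀ t ≥ T, f t ^ τ * ((f t ^ (2 - τ) - f T ^ (2 - τ)) / (2 - τ)) ≤ f' t * F t :=
  stmt_3_general f f' f'' F τ T hf' hf'' hfpos hf'pos hτ2 hT hyp hF
end

section
/- Let f : [0,∞) → ℝ be C¹, positive and nondecreasing, let 1/2 < β₁ < 1 and β₃ > 0, and suppose β₁ < f'(t)F(t)/f(t)² < β₃ for all t ≥ t₀ > 0. Define ξ(t) := β₁ f(t)/F(t) for t ≥ t₀. Then for all t ≥ t₀: ξ'(t) + ξ(t)² = β₁( f'(t)/F(t) − (1−β₁) f(t)²/F(t)² ) ≥ (2β₁−1) f'(t)/F(t) ≥ ((2β₁−1)/β₃) (f'(t)/f(t))². -/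
open Set intervalIntegral

/-! With `ξ = β f / F` and `F' = f`, the quotient rule gives
`ξ' + ξ² = β (f'/F − (1 − β) f²/F²)`. Writing `x = f' F / f²`, the first bound is
`(1 − β)(x − β) ≥ 0` (times `f²/F²`), and the second is `x ≤ β₃`, rewritten as
`(f'/f)² / β₃ = (f'/F) · x / β₃ ≤ f'/F`. -/

theorem hasDerivAt_integral_of_continuousOn_Ici_s8 {E : Type*} [NormedAddCommGroup E]
    [NormedSpace ℝ E] [CompleteSpace E] {f : ℝ → E} {a b : ℝ}
    (hf : ContinuousOn f (Ici a)) (hab : a < b) :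
    HasDerivAt (fun u => ∫ x in a..u, f x) (f b) b := by
  refine integral_hasDerivAt_right ?_ ?_ ?_
  · exact (hf.mono fun x hx => (uIcc_of_le hab.le ▸ hx).1).intervalIntegrable
  · exact (hf.mono Ioi_subset_Ici_self).stronglyMeasurableAtFilter isOpen_Ioi b hab
  · exact hf.continuousAt (Ici_mem_nhds hab)

theorem integral_pos_of_pos_on_Ici {f : ℝ → ℝ} {a b : ℝ} (hf : ContinuousOn f (Ici a))
    (hpos : ∀ x ≥ a, 0 < f x) (hab : a < b) : 0 < ∫ x in a..b, f x := by
  refine intervalIntegral_pos_of_pos_on ?_ (fun x hx => hpos x hx.1.le) hab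
  exact (hf.mono fun x hx => (uIcc_of_le hab.le ▸ hx).1).intervalIntegrable

theorem deriv_const_mul_div_add_sq {f F : ℝ → ℝ} {f' β t : ℝ} (hf : HasDerivAt f f' t)
    (hF : HasDerivAt F (f t) t) (hFt : F t ≠ 0) :
    deriv (fun s => β * f s / F s) t + (β * f t / F t) ^ 2
      = β * (f' / F t - (1 - β) * f t ^ 2 / F t ^ 2) := by
  have hquot : HasDerivAt (fun s => β * f s / F s) ((β * f' * F t - β * f t * f t) / F t ^ 2) t :=
    (hf.const_mul β).div hF hFt
  rw [hquot.deriv]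
  field_simp
  ring

theorem two_mul_sub_one_mul_div_le {f f' F β : ℝ} (hF : F ≠ 0) (hβ : β ≤ 1)
    (hratio : β * f ^ 2 ≤ f' * F) :
    (2 * β - 1) * (f' / F) ≤ β * (f' / F - (1 - β) * f ^ 2 / F ^ 2) := by
  have key : β * (f' / F - (1 - β) * f ^ 2 / F ^ 2) - (2 * β - 1) * (f' / F)
      = (1 - β) * (f' * F - β * f ^ 2) / F ^ 2 := by
    field_simp
    ring
  rw [← sub_nonneg, key]
  exact div_nonneg (mul_nonneg (by linarith) (by linarith)) (sq_nonneg F)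

theorem div_mul_div_sq_le_mul_div {f f' F c β : ℝ} (hc : 0 ≤ c) (hβ : 0 < β) (hf : f ≠ 0)
    (hF : F ≠ 0) (hnonneg : 0 ≤ f' * F) (hratio : f' * F ≤ β * f ^ 2) :
    c / β * (f' / f) ^ 2 ≤ c * (f' / F) := by
  have factor : (f' / f) ^ 2 / β = f' / F * (f' * F / (β * f ^ 2)) := by
    field_simp
  have hquot : 0 ≤ f' / F := by
    rw [show f' / F = f' * F / F ^ 2 by field_simp]
    exact div_nonneg hnonneg (sq_nonneg F)
  have hle : f' * F / (β * f ^ 2) ≤ 1 := div_le_one_of_le₀ hratio (by positivity)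
  calc c / β * (f' / f) ^ 2 = c * ((f' / f) ^ 2 / β) := by ring
    _ = c * (f' / F * (f' * F / (β * f ^ 2))) := by rw [factor]
    _ ≤ c * (f' / F) := mul_le_mul_of_nonneg_left (mul_le_of_le_one_right hquot hle) hc

theorem stmt_8_general (f f' F : ℝ → ℝ) (β₁ β₃ t₀ : ℝ)
    (hf' : ∀ t ∈ Set.Ici (0:ℝ), HasDerivAt f (f' t) t)
    (hpos : ∀ t ≥ (0:ℝ), 0 < f t)
    (hβ₁ : 1/2 < β₁) (hβ₁1 : β₁ < 1) (hβ₃ : 0 < β₃) (ht₀ : 0 < t₀)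
    (hyp : ∀ t ≥ t₀, β₁ < f' t * F t / (f t) ^ 2 ∧ f' t * F t / (f t) ^ 2 < β₃)
    (hF : ∀ t, F t = ∫ s in (0:ℝ)..t, f s) :
    ∀ t ≥ t₀,
      deriv (fun s => β₁ * f s / F s) t + (β₁ * f t / F t) ^ 2
          = β₁ * (f' t / F t - (1 - β₁) * (f t) ^ 2 / (F t) ^ 2) ∧
        (2 * β₁ - 1) * (f' t / F t)
          ≤ deriv (fun s => β₁ * f s / F s) t + (β₁ * f t / F t) ^ 2 ∧
        (2 * β₁ - 1) / β₃ * (f' t / f t) ^ 2 ≤ (2 * β₁ - 1) * (f' t / F t) := by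
  intro t ht
  have ht0 : 0 < t := ht₀.trans_le ht
  have hcont : ContinuousOn f (Ici 0) := fun s hs => (hf' s hs).continuousAt.continuousWithinAt
  have hFt : 0 < F t := hF t ▸ integral_pos_of_pos_on_Ici hcont hpos ht0
  have hft : 0 < f t := hpos t ht0.le
  have hFd : HasDerivAt F (f t) t := funext hF ▸ hasDerivAt_integral_of_continuousOn_Ici_s8 hcont ht0
  obtain ⟨hlow, hup⟩ := hyp t ht
  rw [lt_div_iff₀ (by positivity)] at hlow
  rw [div_lt_iff₀ (by positivity)] at hup
  have hriccati := deriv_const_mul_div_add_sq (β := β₁) (hf' t ht0.le) hFd hFt.ne'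
  refine ⟨hriccati, hriccati ▸ two_mul_sub_one_mul_div_le hFt.ne' hβ₁1.le hlow.le, ?_⟩
  exact div_mul_div_sq_le_mul_div (by linarith) hβ₃ hft.ne' hFt.ne' 
    ((mul_nonneg (by linarith) (sq_nonneg _)).trans hlow.le) hup.le

/-- Let `f : [0,∞) → ℝ` be C¹, positive and nondecreasing, `1/2 < β₁ < 1`,
`β₃ > 0`, `t₀ > 0`, with `β₁ < f'(t)F(t)/f(t)² < β₃` for `t ≥ t₀`, and set
`ξ(t) := β₁ f(t)/F(t)`. Then for all `t ≥ t₀`: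
`ξ'(t) + ξ(t)² = β₁(f'(t)/F(t) − (1−β₁) f(t)²/F(t)²) ≥ (2β₁−1) f'(t)/F(t)
  ≥ ((2β₁−1)/β₃)(f'(t)/f(t))²`, where `F(t) = ∫₀^t f(s) ds`. -/
theorem stmt_8 (f f' F : ℝ → ℝ) (β₁ β₃ t₀ : ℝ)
    (hf' : ∀ t ∈ Set.Ici (0:ℝ), HasDerivAt f (f' t) t)
    (hf'cont : ContinuousOn f' (Set.Ici 0))
    (hpos : ∀ t ≥ (0:ℝ), 0 < f t)
    (hmono : MonotoneOn f (Set.Ici 0))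
    (hβ₁ : 1/2 < β₁) (hβ₁1 : β₁ < 1) (hβ₃ : 0 < β₃) (ht₀ : 0 < t₀)
    (hyp : ∀ t ≥ t₀, β₁ < f' t * F t / (f t) ^ 2 ∧ f' t * F t / (f t) ^ 2 < β₃)
    (hF : ∀ t, F t = ∫ s in (0:ℝ)..t, f s) :
    ∀ t ≥ t₀,
      deriv (fun s => β₁ * f s / F s) t + (β₁ * f t / F t) ^ 2
          = β₁ * (f' t / F t - (1 - β₁) * (f t) ^ 2 / (F t) ^ 2) ∧
        (2 * β₁ - 1) * (f' t / F t)
          ≤ deriv (fun s => β₁ * f s / F s) t + (β₁ * f t / F t) ^ 2 ∧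
        (2 * β₁ - 1) / β₃ * (f' t / f t) ^ 2 ≤ (2 * β₁ - 1) * (f' t / F t) :=
  stmt_8_general f f' F β₁ β₃ t₀ hf' hpos hβ₁ hβ₁1 hβ₃ ht₀ hyp hF
end

section
/- Let f : [0,∞) → ℝ be C¹, positive and nondecreasing, let 1/2 < β₁ < 1 and β₃ > 0, and suppose β₁ < f'(t)F(t)/f(t)² < β₃ for all t ≥ t₀ > 0, where in addition β₁ < β₂ < f'(t)F(t)/f(t)² for some β₂ and all t ≥ t₀. Define ξ(t) := β₁ f(t)/F(t). Then there exists a constant C > 0 (depending only on f, t₀, β₁, β₂, β₃) such that for all t ≥ t₀: f(t) ( f'(t)/f(t) − ξ(t) ) · exp( 2∫_{t₀}^t ( ξ(s) + √(ξ'(s)+ξ(s)²) ) ds ) ≥ C · F(t)^{2β₁−1} · f(t)^{2 + 2√((2β₁−1)/β₃)}. -/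
open Set intervalIntegral

/-! With `x = f'F/f² ∈ (β₂, β₃)` the Riccati expression is
`ξ' + ξ² = (f/F)² (β₁x − β₁(1 − β₁))`, and `(2β₁ − 1)x² ≤ (2β₁ − 1)β₃x` together with
`(1 − β₁)(x − β₁) ≥ 0` shows that it dominates `c² (f'/f)²`, `c = √((2β₁ − 1)/β₃)`.
So the integrand is at least `β₁ f/F + c f'/f = (β₁ log F + c log f)'`, and the exponential is
at least a constant times `F^{2β₁} f^{2c}`. The prefactor `(f'F − β₁f²)/F` is at least
`(β₂ − β₁) f²/F`. -/

section Primitive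

variable {f F : ℝ → ℝ}

theorem hasDerivAt_of_eq_integral_zero (hF : ∀ t, F t = ∫ s in (0:ℝ)..t, f s)
    (hf : ContinuousOn f (Ici 0)) {t : ℝ} (ht : 0 < t) : HasDerivAt F (f t) t := by
  rw [funext hF]
  refine integral_hasDerivAt_right ?_ ?_ (hf.continuousAt (Ici_mem_nhds ht))
  · exact (hf.mono (by simp [uIcc_of_le ht.le, Icc_subset_Ici_self])).intervalIntegrable
  · exact (hf.mono Ioi_subset_Ici_self).stronglyMeasurableAtFilter isOpen_Ioi t ht

theorem pos_of_eq_integral_zero (hF : ∀ t, F t = ∫ s in (0:ℝ)..t, f s)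
    (hf : ContinuousOn f (Ici 0)) (hpos : ∀ s > 0, 0 < f s) {t : ℝ} (ht : 0 < t) :
    0 < F t := by
  rw [hF]
  refine intervalIntegral_pos_of_pos_on ?_ (fun s hs => hpos s hs.1) ht
  exact (hf.mono (by simp [uIcc_of_le ht.le, Icc_subset_Ici_self])).intervalIntegrable

end Primitive

section Pointwise

variable {β₁ β₂ β₃ a a' A : ℝ}

theorem sqrt_mul_div_le_sqrt_riccati (hβ₁ : 1 / 2 ≤ β₁) (hβ₁1 : β₁ ≤ 1) (ha : 0 < a)
    (hA : 0 < A) (hlo : β₁ ≤ a' * A / a ^ 2) (hhi : a' * A / a ^ 2 ≤ β₃) :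
    √((2 * β₁ - 1) / β₃) * (a' / a) ≤
      √((β₁ * a' * A - β₁ * a * a) / A ^ 2 + (β₁ * a / A) ^ 2) := by
  have ha2 : 0 < a ^ 2 := by positivity
  rw [le_div_iff₀ ha2] at hlo
  rw [div_le_iff₀ ha2] at hhi
  have hβ₃ : 0 < β₃ := by nlinarith
  refine Real.le_sqrt_of_sq_le ?_
  rw [mul_pow, Real.sq_sqrt (by apply div_nonneg <;> linarith)]
  have hriccati : (β₁ * a' * A - β₁ * a * a) / A ^ 2 + (β₁ * a / A) ^ 2
      = (β₁ * (a' * A) - β₁ * (1 - β₁) * a ^ 2) / A ^ 2 := by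
    field_simp
    ring
  have hlhs : (2 * β₁ - 1) / β₃ * (a' / a) ^ 2
      = (2 * β₁ - 1) * (a' * A) ^ 2 / (β₃ * a ^ 2 * A ^ 2) := by
    field_simp
  rw [hriccati, hlhs, div_le_div_iff₀ (by positivity) (by positivity)]
  have hx : 0 ≤ a' * A := by nlinarith
  nlinarith [mul_nonneg (mul_nonneg (by linarith : (0:ℝ) ≤ 2 * β₁ - 1) hx) (sub_nonneg.2 hhi),
    mul_nonneg (mul_nonneg (sub_nonneg.2 hβ₁1) (sub_nonneg.2 hlo))
      (by positivity : 0 ≤ β₃ * a ^ 2),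
    sq_nonneg A]

theorem sub_mul_sq_div_le_mul_sub_div (ha : 0 < a) (hA : 0 < A) (h : β₂ ≤ a' * A / a ^ 2) :
    (β₂ - β₁) * a ^ 2 / A ≤ a * (a' / a - β₁ * a / A) := by
  rw [le_div_iff₀ (by positivity)] at h
  have : a * (a' / a - β₁ * a / A) = (a' * A - β₁ * a ^ 2) / A := by
    field_simp
  rw [this]
  gcongr
  linarith

end Pointwise

section Riccati

variable {f f' F : ℝ → ℝ} {β₁ β₃ t₀ : ℝ}

theorem hasDerivAt_const_mul_div_primitive {x : ℝ} (hf : HasDerivAt f (f' x) x)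
    (hF : HasDerivAt F (f x) x) (hF0 : F x ≠ 0) :
    HasDerivAt (fun r => β₁ * f r / F r) ((β₁ * f' x * F x - β₁ * f x * f x) / F x ^ 2) x :=
  (hf.const_mul β₁).div hF hF0

theorem continuousOn_riccati_integrand {s : Set ℝ} (hf : ∀ x ∈ s, HasDerivAt f (f' x) x)
    (hf' : ContinuousOn f' s) (hF : ∀ x ∈ s, HasDerivAt F (f x) x) (hF0 : ∀ x ∈ s, F x ≠ 0) :
    ContinuousOn (fun x => β₁ * f x / F x +
      √(deriv (fun r => β₁ * f r / F r) x + (β₁ * f x / F x) ^ 2)) s := by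
  have hfc : ContinuousOn f s := fun x hx => (hf x hx).continuousAt.continuousWithinAt
  have hFc : ContinuousOn F s := fun x hx => (hF x hx).continuousAt.continuousWithinAt
  have hξ : ContinuousOn (fun x => β₁ * f x / F x) s := (continuousOn_const.mul hfc).div hFc hF0
  have hξ' : ContinuousOn (fun x => deriv (fun r => β₁ * f r / F r) x) s := by
    refine ContinuousOn.congr (f := fun x => (β₁ * f' x * F x - β₁ * f x * f x) / F x ^ 2) ?_
      fun x hx => (hasDerivAt_const_mul_div_primitive (hf x hx) (hF x hx) (hF0 x hx)).deriv
    exact (((continuousOn_const.mul hf').mul hFc).sub ((continuousOn_const.mul hfc).mul hfc)).div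
      (hFc.pow 2) fun x hx => pow_ne_zero 2 (hF0 x hx)
  exact hξ.add (hξ'.add (hξ.pow 2)).sqrt

theorem rpow_mul_rpow_div_le_exp_integral (hβ₁ : 1 / 2 ≤ β₁) (hβ₁1 : β₁ ≤ 1)
    (hf : ∀ x ∈ Ici t₀, HasDerivAt f (f' x) x) (hf' : ContinuousOn f' (Ici t₀))
    (hF : ∀ x ∈ Ici t₀, HasDerivAt F (f x) x) (hfpos : ∀ x ≥ t₀, 0 < f x)
    (hFpos : ∀ x ≥ t₀, 0 < F x)
    (hratio : ∀ x ≥ t₀, β₁ ≤ f' x * F x / f x ^ 2 ∧ f' x * F x / f x ^ 2 ≤ β₃)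
    {t : ℝ} (ht : t₀ ≤ t) :
    F t ^ (2 * β₁) * f t ^ (2 * √((2 * β₁ - 1) / β₃)) /
        (F t₀ ^ (2 * β₁) * f t₀ ^ (2 * √((2 * β₁ - 1) / β₃))) ≤
      Real.exp (2 * ∫ s in t₀..t, β₁ * f s / F s +
        √(deriv (fun r => β₁ * f r / F r) s + (β₁ * f s / F s) ^ 2)) := by
  set c := √((2 * β₁ - 1) / β₃)
  set G : ℝ → ℝ := fun r => β₁ * Real.log (F r) + c * Real.log (f r)
  have hG : ∀ x ∈ Ici t₀, HasDerivAt G (β₁ * (f x / F x) + c * (f' x / f x)) x := fun x hx =>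
    (((hF x hx).log (hFpos x hx).ne').const_mul β₁).add
      (((hf x hx).log (hfpos x hx).ne').const_mul c)
  have hrpow : ∀ x ≥ t₀, F x ^ (2 * β₁) * f x ^ (2 * c) = Real.exp (2 * G x) := fun x hx => by
    rw [Real.rpow_def_of_pos (hFpos x hx), Real.rpow_def_of_pos (hfpos x hx), ← Real.exp_add]
    congr 1
    ring
  have hIcc : Icc t₀ t ⊆ Ici t₀ := Icc_subset_Ici_self
  have hGint : G t - G t₀ ≤ ∫ s in t₀..t, β₁ * f s / F s +
      √(deriv (fun r => β₁ * f r / F r) s + (β₁ * f s / F s) ^ 2) := by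
    refine sub_le_integral_of_hasDeriv_right_of_le ht
      (fun x hx => (hG x (hIcc hx)).continuousAt.continuousWithinAt)
      (fun x hx => (hG x (hIcc (Ioo_subset_Icc_self hx))).hasDerivWithinAt)
      ((continuousOn_riccati_integrand hf hf' hF fun x hx => (hFpos x hx).ne').mono hIcc
        |>.integrableOn_Icc) fun x hx => ?_
    have hx : t₀ ≤ x := hx.1.le
    rw [(hasDerivAt_const_mul_div_primitive (hf x hx) (hF x hx) (hFpos x hx).ne').deriv]
    exact add_le_add (mul_div_assoc _ _ _).symm.le (sqrt_mul_div_le_sqrt_riccati hβ₁ hβ₁1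
      (hfpos x hx) (hFpos x hx) (hratio x hx).1 (hratio x hx).2)
  rw [hrpow t ht, hrpow t₀ le_rfl, ← Real.exp_sub, Real.exp_le_exp, ← mul_sub]
  linarith

end Riccati

theorem stmt_19_general (f f' F : ℝ → ℝ) (β₁ β₂ β₃ t₀ : ℝ)
    (hf' : ∀ t ∈ Set.Ici (0:ℝ), HasDerivAt f (f' t) t)
    (hf'cont : ContinuousOn f' (Set.Ici 0))
    (hpos : ∀ t ≥ (0:ℝ), 0 < f t)
    (hβ₁ : 1/2 < β₁) (hβ₁1 : β₁ < 1) (hβ₁₂ : β₁ < β₂)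
    (ht₀ : 0 < t₀)
    (hyp : ∀ t ≥ t₀, β₂ < f' t * F t / (f t) ^ 2 ∧ f' t * F t / (f t) ^ 2 < β₃)
    (hF : ∀ t, F t = ∫ s in (0:ℝ)..t, f s) :
    ∃ C > (0:ℝ), ∀ t ≥ t₀,
      C * F t ^ (2 * β₁ - 1) * f t ^ (2 + 2 * Real.sqrt ((2 * β₁ - 1) / β₃)) ≤
        f t * (f' t / f t - β₁ * f t / F t) *
          Real.exp (2 * ∫ s in t₀..t,
            β₁ * f s / F s +
              Real.sqrt (deriv (fun r => β₁ * f r / F r) s + (β₁ * f s / F s) ^ 2)) := by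
  have hsub : Ici t₀ ⊆ Ici (0:ℝ) := Ici_subset_Ici.2 ht₀.le
  have hfc : ContinuousOn f (Ici 0) := fun t ht => (hf' t ht).continuousAt.continuousWithinAt
  have hfpos : ∀ t ≥ t₀, 0 < f t := fun t ht => hpos t (hsub ht)
  have hF' : ∀ t ∈ Ici t₀, HasDerivAt F (f t) t := fun t ht =>
    hasDerivAt_of_eq_integral_zero hF hfc (ht₀.trans_le ht)
  have hFpos : ∀ t ≥ t₀, 0 < F t := fun t ht =>
    pos_of_eq_integral_zero hF hfc (fun s hs => hpos s hs.le) (ht₀.trans_le ht)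
  set c := √((2 * β₁ - 1) / β₃)
  have hF₀ := hFpos t₀ le_rfl
  have hf₀ := hfpos t₀ le_rfl
  refine ⟨(β₂ - β₁) / (F t₀ ^ (2 * β₁) * f t₀ ^ (2 * c)), by bound, fun t ht => ?_⟩
  have hexp := rpow_mul_rpow_div_le_exp_integral hβ₁.le hβ₁1.le (fun x hx => hf' x (hsub hx))
    (hf'cont.mono hsub) hF' hfpos hFpos
    (fun x hx => ⟨hβ₁₂.le.trans (hyp x hx).1.le, (hyp x hx).2.le⟩) ht
  have hpre := sub_mul_sq_div_le_mul_sub_div (β₁ := β₁) (hfpos t ht) (hFpos t ht) (hyp t ht).1.le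
  have hFt := hFpos t ht
  have hft := hfpos t ht
  calc (β₂ - β₁) / (F t₀ ^ (2 * β₁) * f t₀ ^ (2 * c)) * F t ^ (2 * β₁ - 1) * f t ^ (2 + 2 * c)
      = (β₂ - β₁) * f t ^ 2 / F t *
          (F t ^ (2 * β₁) * f t ^ (2 * c) / (F t₀ ^ (2 * β₁) * f t₀ ^ (2 * c))) := by
        rw [Real.rpow_sub_one hFt.ne', Real.rpow_add hft, Real.rpow_two]
        field_simp
    _ ≤ _ := mul_le_mul hpre hexp (by positivity) (hpre.trans' (by bound))

/-- Let `f : [0,∞) → ℝ` be C¹, positive and nondecreasing,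
`1/2 < β₁ < β₂`, `β₁ < 1`, `β₃ > 0`, `t₀ > 0`, with `β₂ < f'(t)F(t)/f(t)² < β₃` for all
`t ≥ t₀`, where `F(t) = ∫₀^t f(s) ds`. With `ξ(t) := β₁ f(t)/F(t)` there is a constant
`C > 0` such that for all `t ≥ t₀`:
`f(t)(f'(t)/f(t) − ξ(t)) exp(2∫_{t₀}^t (ξ(s) + √(ξ'(s)+ξ(s)²)) ds)
  ≥ C F(t)^{2β₁−1} f(t)^{2 + 2√((2β₁−1)/β₃)}`. -/
theorem stmt_19 (f f' F : ℝ → ℝ) (β₁ β₂ β₃ t₀ : ℝ)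
    (hf' : ∀ t ∈ Set.Ici (0:ℝ), HasDerivAt f (f' t) t)
    (hf'cont : ContinuousOn f' (Set.Ici 0))
    (hpos : ∀ t ≥ (0:ℝ), 0 < f t)
    (hmono : MonotoneOn f (Set.Ici 0))
    (hβ₁ : 1/2 < β₁) (hβ₁1 : β₁ < 1) (hβ₁₂ : β₁ < β₂) (hβ₃ : 0 < β₃)
    (ht₀ : 0 < t₀)
    (hyp : ∀ t ≥ t₀, β₂ < f' t * F t / (f t) ^ 2 ∧ f' t * F t / (f t) ^ 2 < β₃)
    (hF : ∀ t, F t = ∫ s in (0:ℝ)..t, f s) :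
    ∃ C > (0:ℝ), ∀ t ≥ t₀,
      C * F t ^ (2 * β₁ - 1) * f t ^ (2 + 2 * Real.sqrt ((2 * β₁ - 1) / β₃)) ≤
        f t * (f' t / f t - β₁ * f t / F t) *
          Real.exp (2 * ∫ s in t₀..t,
            β₁ * f s / F s +
              Real.sqrt (deriv (fun r => β₁ * f r / F r) s + (β₁ * f s / F s) ^ 2)) :=
  stmt_19_general f f' F β₁ β₂ β₃ t₀ hf' hf'cont hpos hβ₁ hβ₁1 hβ₁₂ ht₀ hyp hF
end
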